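/- Let a, b ≥ 0 be real numbers and let r ∈ (0,1). With j_l(z) = z^l / (2^{l+1} · l!) · ∫_{-1}^{1} cos(z t) · (1 − t²)^l dt denoting the Poisson integral representation of the spherical Bessel function of the first kind, the sequence N ↦ r^{−N} · | ∑_{l=N+1}^∞ (2l+1)·j_l(a)·j_l(b) | converges to 0 as N → ∞; that is, the truncation residual decays to zero faster than any geometric sequence. -/

import Mathlib

/-- Poisson integral representation of the spherical Bessel function of the first kind. -/
noncomputable def sphericalBessel (l : ℕ) (z : ℝ) : ℝ :=
  z ^ l / (2 ^ (l + 1) * l.factorial) *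
    ∫ t in (-1 : ℝ)..1, Real.cos (z * t) * (1 - t ^ 2) ^ l

/-!
The Poisson integral gives `|j_l(z)| ≤ |z|^l / (2^l l!)`, so with `2l + 1 ≤ 4^l` the `l`-th term
of the series is at most `|ab|^l / l!`. Since `n! k! ≤ (n + k)!`, the tail from `n` on is then at
most `C^n / n! · e^C` with `C = |ab|`, and factorial decay beats every geometric factor `r^{-N}`.
-/

open Filter Topology Nat

lemma abs_integral_cos_mul_one_sub_sq_pow_le (z : ℝ) (l : ℕ) :
    |∫ t in (-1 : ℝ)..1, Real.cos (z * t) * (1 - t ^ 2) ^ l| ≤ 2 := by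
  have hbound : ∀ t ∈ Set.uIoc (-1 : ℝ) 1,
      ‖Real.cos (z * t) * (1 - t ^ 2) ^ l‖ ≤ 1 := by
    intro t ht
    rw [Set.uIoc_of_le (by norm_num)] at ht
    have ht2 : t ^ 2 ≤ 1 := by nlinarith [ht.1, ht.2]
    rw [Real.norm_eq_abs, abs_mul, abs_pow, abs_of_nonneg (by linarith : 0 ≤ 1 - t ^ 2)]
    exact mul_le_one₀ (Real.abs_cos_le_one _) (by positivity)
      (pow_le_one₀ (by linarith) (by nlinarith))
  rw [← Real.norm_eq_abs]
  exact (intervalIntegral.norm_integral_le_of_norm_le_const hbound).trans_eq (by norm_num)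

lemma abs_sphericalBessel_le (l : ℕ) (z : ℝ) :
    |sphericalBessel l z| ≤ |z| ^ l / (2 ^ l * l !) := by
  rw [sphericalBessel, abs_mul, abs_div, abs_pow,
    abs_of_pos (by positivity : (0 : ℝ) < 2 ^ (l + 1) * l !)]
  calc |z| ^ l / (2 ^ (l + 1) * l !) * |∫ t in (-1 : ℝ)..1, Real.cos (z * t) * (1 - t ^ 2) ^ l|
      ≤ |z| ^ l / (2 ^ (l + 1) * l !) * 2 := by
        gcongr; exact abs_integral_cos_mul_one_sub_sq_pow_le z l
    _ = |z| ^ l / (2 ^ l * l !) := by rw [pow_succ]; field_simp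

lemma two_mul_add_one_le_four_pow (l : ℕ) : 2 * (l : ℝ) + 1 ≤ 4 ^ l := by
  calc 2 * (l : ℝ) + 1 ≤ 1 + l * 3 := by linarith [l.cast_nonneg (α := ℝ)]
    _ ≤ (1 + 3) ^ l := one_add_mul_le_pow (by norm_num) l
    _ = 4 ^ l := by norm_num

lemma abs_mul_sphericalBessel_mul_sphericalBessel_le (l : ℕ) (a b : ℝ) :
    |(2 * (l : ℝ) + 1) * sphericalBessel l a * sphericalBessel l b| ≤ |a * b| ^ l / l ! := by
  have hfac : (1 : ℝ) ≤ l ! := by exact_mod_cast l.factorial_pos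
  rw [abs_mul, abs_mul, abs_of_nonneg (by positivity : (0 : ℝ) ≤ 2 * l + 1)]
  calc (2 * (l : ℝ) + 1) * |sphericalBessel l a| * |sphericalBessel l b|
      ≤ (2 * (l : ℝ) + 1) * (|a| ^ l / (2 ^ l * l !)) * (|b| ^ l / (2 ^ l * l !)) := by
        gcongr
        exacts [abs_sphericalBessel_le l a, abs_sphericalBessel_le l b]
    _ = (2 * (l : ℝ) + 1) / l ! * (|a * b| ^ l / (4 ^ l * l !)) := by
        rw [abs_mul, mul_pow, show (4 : ℝ) ^ l = 2 ^ l * 2 ^ l by rw [← mul_pow]; norm_num]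
        field_simp
    _ ≤ 4 ^ l * (|a * b| ^ l / (4 ^ l * l !)) := by
        gcongr
        exact div_le_of_le_mul₀ (by positivity) (by positivity)
          ((two_mul_add_one_le_four_pow l).trans (le_mul_of_one_le_right (by positivity) hfac))
    _ = |a * b| ^ l / l ! := by field_simp

lemma pow_add_div_factorial_add_le {C : ℝ} (hC : 0 ≤ C) (n k : ℕ) :
    C ^ (n + k) / (n + k)! ≤ C ^ n / n ! * (C ^ k / k !) := by
  have hfac : ((n ! * k ! : ℕ) : ℝ) ≤ (n + k)! :=
    Nat.cast_le.mpr <|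
      Nat.le_of_dvd (n + k).factorial_pos (factorial_mul_factorial_dvd_factorial_add n k)
  push_cast at hfac
  rw [_root_.div_mul_div_comm, ← pow_add]
  gcongr

lemma abs_tsum_tail_le_pow_div_factorial_mul_exp {f : ℕ → ℝ} {C : ℝ} (hC : 0 ≤ C)
    (hf : ∀ l, |f l| ≤ C ^ l / l !) (n : ℕ) :
    |∑' k, f (n + k)| ≤ C ^ n / n ! * Real.exp C := by
  have hexp : HasSum (fun k : ℕ => C ^ k / k !) (Real.exp C) := by
    rw [Real.exp_eq_exp_ℝ]; exact NormedSpace.expSeries_div_hasSum_exp C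
  rw [← Real.norm_eq_abs]
  exact tsum_of_norm_bounded (hexp.mul_left _)
    fun k => (hf (n + k)).trans (pow_add_div_factorial_add_le hC n k)

lemma tendsto_zpow_neg_mul_abs_tsum_tail {f : ℕ → ℝ} {C : ℝ} (hC : 0 ≤ C)
    (hf : ∀ l, |f l| ≤ C ^ l / l !) (r : ℝ) :
    Tendsto (fun N : ℕ => r ^ (-(N : ℤ)) * |∑' k, f (N + 1 + k)|) atTop (𝓝 0) := by
  refine squeeze_zero_norm (a := fun N => C * Real.exp C * ((|r|⁻¹ * C) ^ N / N !))
    (fun N => ?_) ?_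
  · have hN : (N ! : ℝ) ≤ (N + 1)! := by exact_mod_cast factorial_le N.le_succ
    -- `‖r ^ (-N)‖ = (|r|⁻¹) ^ N` also at `r = 0`, where both sides vanish for `N ≥ 1`.
    rw [norm_mul, norm_abs_eq_norm, Real.norm_eq_abs, Real.norm_eq_abs, abs_zpow, zpow_neg,
      zpow_natCast, ← inv_pow]
    calc (|r|⁻¹) ^ N * |∑' k, f (N + 1 + k)|
        ≤ (|r|⁻¹) ^ N * (C ^ (N + 1) / (N + 1)! * Real.exp C) := by
          gcongr; exact abs_tsum_tail_le_pow_div_factorial_mul_exp hC hf (N + 1)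
      _ = C * Real.exp C * ((|r|⁻¹ * C) ^ N / (N + 1)!) := by ring
      _ ≤ C * Real.exp C * ((|r|⁻¹ * C) ^ N / N !) := by gcongr
  · simpa using (FloorSemiring.tendsto_pow_div_factorial_atTop (|r|⁻¹ * C)).const_mul
      (C * Real.exp C)

theorem residual_superexponential_decay_general (a b : ℝ)
    (r : ℝ) :
    Filter.Tendsto
      (fun N : ℕ => r ^ (-(N : ℤ)) *
        |∑' k : ℕ, (2 * ((N : ℝ) + 1 + k) + 1) *
          sphericalBessel (N + 1 + k) a * sphericalBessel (N + 1 + k) b|)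
      Filter.atTop (nhds 0) := by
  have h := tendsto_zpow_neg_mul_abs_tsum_tail (abs_nonneg (a * b))
    (fun l => abs_mul_sphericalBessel_mul_sphericalBessel_le l a b) r
  simpa only [Nat.cast_add, Nat.cast_one] using h

/-- Superexponential decay of the truncation residual: for `a, b ≥ 0`, `r ∈ (0,1)`,
`r^{-N} |∑_{l=N+1}^∞ (2l+1) j_l(a) j_l(b)| → 0` as `N → ∞`
(the sum over `l ≥ N+1` is written via `l = N+1+k`). -/
theorem residual_superexponential_decay (a b : ℝ) (ha : 0 ≤ a) (hb : 0 ≤ b)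
    (r : ℝ) (hr0 : 0 < r) (hr1 : r < 1) :
    Filter.Tendsto
      (fun N : ℕ => r ^ (-(N : ℤ)) *
        |∑' k : ℕ, (2 * ((N : ℝ) + 1 + k) + 1) *
          sphericalBessel (N + 1 + k) a * sphericalBessel (N + 1 + k) b|)
      Filter.atTop (nhds 0) :=
  residual_superexponential_decay_general a b r
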